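/- arXiv:2007.13620 — 2 statements merged into one kernel-verified Lean document; each statement's English description precedes it below -/
import Mathlib

section
/- Let the group Circle of unit complex numbers act on the unit sphere S⁵ = {(v,w,z) ∈ ℂ³ : |v|²+|w|²+|z|² = 1} by s·(v,w,z) = (sv, sw, z). Then there is a homeomorphism Φ from the orbit space S⁵/Circle to the unit sphere S⁴ = {(a,h,c) ∈ ℂ×ℝ×ℂ : |a|²+h²+|c|² = 1} such that for all s ∈ Circle and all (v,w,z) ∈ S⁵, writing Φ([v,w,z]) = (a,h,c) for the image of the orbit of (v,w,z), one has Φ([sv, w, sz]) = (sa, h, sc) and Φ([sv, w, z]) = (sa, h, c). -/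
/-!
The orbit map is `(v, w, z) ↦ (2 v w̄, |v|² - |w|², z √(2 - |z|²))`. Its first two coordinates form
the Hopf map `ℂ² → ℂ × ℝ`, whose fibres are exactly the `Circle`-orbits `{(s v, s w)}` and which
maps the sphere of radius `√r` onto the sphere of radius `r`. As `|v|² + |w|² = 1 - |z|²`, the
radial rescaling of `z`, which turns `|z|²` into `1 - (1 - |z|²)²` and is injective on the unit
disc, makes the image land on `S⁴` bijectively modulo the action. A continuous bijection from the
compact `S⁵ / Circle` onto the Hausdorff `S⁴` is a homeomorphism; multiplying `v` and `z` by `s`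
multiplies `2 v w̄` and `z √(2 - |z|²)` by `s`, which gives the equivariance.
-/

/-- The unit sphere `S⁵ ⊂ ℂ³`. -/
abbrev SphereC3 : Type := {p : ℂ × ℂ × ℂ // ‖p.1‖ ^ 2 + ‖p.2.1‖ ^ 2 + ‖p.2.2‖ ^ 2 = 1}

/-- The unit sphere `S⁴ ⊂ ℂ × ℝ × ℂ`. -/
abbrev SphereCRC : Type := {q : ℂ × ℝ × ℂ // ‖q.1‖ ^ 2 + q.2.1 ^ 2 + ‖q.2.2‖ ^ 2 = 1}

/-- The defining `Circle`-action `s · (v, w, z) = (s v, s w, z)` on `S⁵`. -/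
def actDiag (s : Circle) (x : SphereC3) : SphereC3 :=
  ⟨((s : ℂ) * x.val.1, (s : ℂ) * x.val.2.1, x.val.2.2), by
    have h := x.property; simpa [Circle.norm_coe] using h⟩

/-- The auxiliary action `s · (v, w, z) = (s v, w, s z)` on `S⁵`. -/
def actFirstThird (s : Circle) (x : SphereC3) : SphereC3 :=
  ⟨((s : ℂ) * x.val.1, x.val.2.1, (s : ℂ) * x.val.2.2), by
    have h := x.property; simpa [Circle.norm_coe] using h⟩

/-- The auxiliary action `s · (v, w, z) = (s v, w, z)` on `S⁵`. -/
def actFirst (s : Circle) (x : SphereC3) : SphereC3 :=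
  ⟨((s : ℂ) * x.val.1, x.val.2.1, x.val.2.2), by
    have h := x.property; simpa [Circle.norm_coe] using h⟩

/-- The orbit relation of the `Circle`-action `s · (v, w, z) = (s v, s w, z)` on `S⁵`. -/
def orbitRelS5 (x y : SphereC3) : Prop := ∃ s : Circle, actDiag s x = y

open Complex ComplexConjugate

theorem Circle.exists_mul_eq_of_norm_eq {x y : ℂ} (h : ‖x‖ = ‖y‖) : ∃ s : Circle, s * x = y := by
  rcases eq_or_ne x 0 with rfl | hx
  · exact ⟨1, by simpa [eq_comm] using h⟩
  · refine ⟨⟨y / x, mem_sphere_zero_iff_norm.2 ?_⟩, div_mul_cancel₀ y hx⟩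
    rw [norm_div, ← h, div_self (norm_ne_zero_iff.2 hx)]

theorem Circle.coe_mul_conj (s : Circle) : (s : ℂ) * conj (s : ℂ) = 1 := by
  rw [← Circle.coe_inv_eq_conj, ← Circle.coe_mul, mul_inv_cancel, Circle.coe_one]

theorem Complex.norm_ofReal_sqrt_sq {t : ℝ} (ht : 0 ≤ t) : ‖((√t : ℝ) : ℂ)‖ ^ 2 = t := by
  rw [norm_real, Real.norm_of_nonneg (Real.sqrt_nonneg t), Real.sq_sqrt ht]

noncomputable def hopf (v w : ℂ) : ℂ × ℝ := (2 * v * conj w, ‖v‖ ^ 2 - ‖w‖ ^ 2)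

theorem hopf_norm_sq (v w : ℂ) :
    ‖(hopf v w).1‖ ^ 2 + (hopf v w).2 ^ 2 = (‖v‖ ^ 2 + ‖w‖ ^ 2) ^ 2 := by
  simp only [hopf, norm_mul, RCLike.norm_conj, Complex.norm_two]
  ring

theorem hopf_circle_mul (s : Circle) (v w : ℂ) : hopf (s * v) (s * w) = hopf v w := by
  simp only [hopf, map_mul, norm_mul, Circle.norm_coe, one_mul, Prod.mk.injEq, and_true]
  linear_combination (2 * v * conj w) * s.coe_mul_conj

theorem hopf_circle_mul_left (s : Circle) (v w : ℂ) :
    hopf (s * v) w = ((s : ℂ) * (hopf v w).1, (hopf v w).2) := by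
  simp only [hopf, norm_mul, Circle.norm_coe, one_mul, Prod.mk.injEq, and_true]
  ring

theorem exists_circle_mul_of_hopf_eq {v w v' w' : ℂ} (h : hopf v w = hopf v' w') :
    ∃ s : Circle, s * v = v' ∧ s * w = w' := by
  have hsum : ‖v‖ ^ 2 + ‖w‖ ^ 2 = ‖v'‖ ^ 2 + ‖w'‖ ^ 2 := by
    have := hopf_norm_sq v w
    rw [h, hopf_norm_sq] at this
    exact ((pow_left_inj₀ (by positivity) (by positivity) two_ne_zero).1 this).symm
  have hdiff : ‖v‖ ^ 2 - ‖w‖ ^ 2 = ‖v'‖ ^ 2 - ‖w'‖ ^ 2 := congrArg Prod.snd h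
  have hv : ‖v‖ = ‖v'‖ := by
    refine (pow_left_inj₀ (norm_nonneg _) (norm_nonneg _) two_ne_zero).1 ?_
    linarith
  have hw : ‖w‖ = ‖w'‖ := by
    refine (pow_left_inj₀ (norm_nonneg _) (norm_nonneg _) two_ne_zero).1 ?_
    linarith
  rcases eq_or_ne v 0 with rfl | hv0
  · obtain ⟨s, hs⟩ := Circle.exists_mul_eq_of_norm_eq hw
    exact ⟨s, by simpa [eq_comm] using hv, hs⟩
  · -- `s` is pinned down by `v`; then `v w̄ = v' w̄' = s v w̄'` forces `w̄ = s w̄'`.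
    obtain ⟨s, hs⟩ := Circle.exists_mul_eq_of_norm_eq hv
    refine ⟨s, hs, ?_⟩
    have hfst : 2 * v * conj w = 2 * v' * conj w' := congrArg Prod.fst h
    rw [← hs] at hfst
    have hconj : conj w = s * conj w' := by
      apply mul_left_cancel₀ (mul_ne_zero two_ne_zero hv0)
      linear_combination hfst
    have hw' : w = conj (s : ℂ) * w' := by
      simpa only [conj_conj, map_mul] using congrArg conj hconj
    rw [hw', ← mul_assoc, s.coe_mul_conj, one_mul]

theorem exists_hopf_eq (a : ℂ) (h : ℝ) : ∃ v w : ℂ, hopf v w = (a, h) := by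
  set r := √(‖a‖ ^ 2 + h ^ 2)
  have hr : r ^ 2 = ‖a‖ ^ 2 + h ^ 2 := Real.sq_sqrt (by positivity)
  have hhr : |h| ≤ r := Real.abs_le_sqrt (by nlinarith [sq_nonneg ‖a‖])
  rcases lt_or_ge 0 (r + h) with hpos | hnonpos
  · set v : ℂ := ((√((r + h) / 2) : ℝ) : ℂ)
    have hv : ‖v‖ ^ 2 = (r + h) / 2 := Complex.norm_ofReal_sqrt_sq (by positivity)
    have hv0 : v ≠ 0 := by
      rw [← norm_ne_zero_iff, ← pow_ne_zero_iff two_ne_zero, hv]; positivity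
    refine ⟨v, conj a / (2 * v), Prod.ext ?_ ?_⟩
    · have hvc : conj v = v := conj_ofReal _
      simp only [hopf, map_div₀, map_mul, conj_conj, map_ofNat, hvc]
      field_simp
    · simp only [hopf, norm_div, norm_mul, RCLike.norm_conj, Complex.norm_two, div_pow, mul_pow, hv]
      field_simp
      nlinarith
  · have hh : h = -r := by linarith [neg_abs_le h]
    have ha : a = 0 := by
      rw [hh] at hr
      rw [← norm_eq_zero, ← sq_eq_zero_iff]
      linarith
    refine ⟨0, ((√r : ℝ) : ℂ), Prod.ext ?_ ?_⟩
    · simp [hopf, ha]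
    · simp only [hopf, norm_zero, Complex.norm_ofReal_sqrt_sq (t := r) (Real.sqrt_nonneg _), hh]
      ring

noncomputable def radialStretch (z : ℂ) : ℂ := z * ((√(2 - ‖z‖ ^ 2) : ℝ) : ℂ)

theorem norm_radialStretch_sq {z : ℂ} (hz : ‖z‖ ^ 2 ≤ 2) :
    ‖radialStretch z‖ ^ 2 = 1 - (1 - ‖z‖ ^ 2) ^ 2 := by
  rw [radialStretch, norm_mul, mul_pow, Complex.norm_ofReal_sqrt_sq (by linarith)]
  ring

theorem radialStretch_circle_mul (s : Circle) (z : ℂ) :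
    radialStretch (s * z) = s * radialStretch z := by
  simp only [radialStretch, norm_mul, Circle.norm_coe, one_mul]
  ring

theorem radialStretch_injOn : Set.InjOn radialStretch (Metric.closedBall 0 1) := by
  intro z hz z' hz' h
  rw [mem_closedBall_zero_iff] at hz hz'
  have hz2 : ‖z‖ ^ 2 ≤ 1 := pow_le_one₀ (norm_nonneg _) hz
  have hz2' : ‖z'‖ ^ 2 ≤ 1 := pow_le_one₀ (norm_nonneg _) hz'
  have hnorm : ‖z‖ ^ 2 = ‖z'‖ ^ 2 := by
    have := congrArg (‖·‖ ^ 2) h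
    simp only [norm_radialStretch_sq (hz2.trans one_le_two),
      norm_radialStretch_sq (hz2'.trans one_le_two)] at this
    have hsq : (1 - ‖z‖ ^ 2) ^ 2 = (1 - ‖z'‖ ^ 2) ^ 2 := by linarith
    linarith [(pow_left_inj₀ (by linarith) (by linarith) two_ne_zero).1 hsq]
  have hsqrt : ((√(2 - ‖z'‖ ^ 2) : ℝ) : ℂ) ≠ 0 :=
    ofReal_ne_zero.2 (Real.sqrt_ne_zero'.2 (by linarith))
  rw [radialStretch, radialStretch, hnorm] at h
  exact mul_right_cancel₀ hsqrt h

theorem exists_radialStretch_eq {c : ℂ} {r : ℝ} (hr : 0 ≤ r) (hc : ‖c‖ ^ 2 = 1 - r ^ 2) :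
    ∃ z : ℂ, ‖z‖ ^ 2 = 1 - r ∧ radialStretch z = c := by
  have hsqrt : ((√(1 + r) : ℝ) : ℂ) ≠ 0 := ofReal_ne_zero.2 (Real.sqrt_ne_zero'.2 (by linarith))
  have hz : ‖c / ((√(1 + r) : ℝ) : ℂ)‖ ^ 2 = 1 - r := by
    rw [norm_div, div_pow, Complex.norm_ofReal_sqrt_sq (by linarith), hc]
    field_simp
    ring
  refine ⟨c / ((√(1 + r) : ℝ) : ℂ), hz, ?_⟩
  rw [radialStretch, hz, show (2 : ℝ) - (1 - r) = 1 + r by ring, div_mul_cancel₀ c hsqrt]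

namespace SphereC3

theorem norm_fst_sq_add_norm_snd_fst_sq (x : SphereC3) :
    ‖x.1.1‖ ^ 2 + ‖x.1.2.1‖ ^ 2 = 1 - ‖x.1.2.2‖ ^ 2 := by
  linarith [x.2]

theorem norm_snd_snd_le_one (x : SphereC3) : ‖x.1.2.2‖ ≤ 1 := by
  have := x.norm_fst_sq_add_norm_snd_fst_sq
  exact (sq_le_one_iff₀ (norm_nonneg _)).1 (by nlinarith [sq_nonneg ‖x.1.1‖, sq_nonneg ‖x.1.2.1‖])

noncomputable def toSphereCRC (x : SphereC3) : SphereCRC :=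
  ⟨((hopf x.1.1 x.1.2.1).1, (hopf x.1.1 x.1.2.1).2, radialStretch x.1.2.2), by
    have hz : ‖x.1.2.2‖ ^ 2 ≤ 2 := by nlinarith [x.norm_snd_snd_le_one, norm_nonneg x.1.2.2]
    rw [hopf_norm_sq, norm_radialStretch_sq hz, x.norm_fst_sq_add_norm_snd_fst_sq]
    ring⟩

theorem continuous_toSphereCRC : Continuous toSphereCRC :=
  Continuous.subtype_mk (by unfold hopf radialStretch; fun_prop) _

theorem toSphereCRC_actDiag (s : Circle) (x : SphereC3) :
    toSphereCRC (actDiag s x) = toSphereCRC x := by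
  simp only [toSphereCRC, actDiag, hopf_circle_mul]

theorem toSphereCRC_actFirstThird (s : Circle) (x : SphereC3) :
    (toSphereCRC (actFirstThird s x)).val =
      ((s : ℂ) * (toSphereCRC x).val.1, (toSphereCRC x).val.2.1,
        (s : ℂ) * (toSphereCRC x).val.2.2) := by
  simp only [toSphereCRC, actFirstThird, hopf_circle_mul_left, radialStretch_circle_mul]

theorem toSphereCRC_actFirst (s : Circle) (x : SphereC3) :
    (toSphereCRC (actFirst s x)).val =
      ((s : ℂ) * (toSphereCRC x).val.1, (toSphereCRC x).val.2.1, (toSphereCRC x).val.2.2) := by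
  simp only [toSphereCRC, actFirst, hopf_circle_mul_left]

theorem orbitRelS5_of_toSphereCRC_eq {x y : SphereC3} (h : toSphereCRC x = toSphereCRC y) :
    orbitRelS5 x y := by
  have hval := congrArg Subtype.val h
  simp only [toSphereCRC, Prod.mk.injEq] at hval
  obtain ⟨h1, h2, h3⟩ := hval
  obtain ⟨s, hv, hw⟩ := exists_circle_mul_of_hopf_eq (Prod.ext h1 h2)
  have hz : x.1.2.2 = y.1.2.2 :=
    radialStretch_injOn (mem_closedBall_zero_iff.2 x.norm_snd_snd_le_one)
      (mem_closedBall_zero_iff.2 y.norm_snd_snd_le_one) h3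
  exact ⟨s, Subtype.ext (Prod.ext hv (Prod.ext hw hz))⟩

theorem toSphereCRC_surjective : Function.Surjective toSphereCRC := by
  rintro ⟨⟨a, h, c⟩, hq⟩
  obtain ⟨v, w, hvw⟩ := exists_hopf_eq a h
  have hr : (‖v‖ ^ 2 + ‖w‖ ^ 2) ^ 2 = ‖a‖ ^ 2 + h ^ 2 := by rw [← hopf_norm_sq, hvw]
  obtain ⟨z, hz, hzc⟩ :=
    exists_radialStretch_eq (c := c) (r := ‖v‖ ^ 2 + ‖w‖ ^ 2) (by positivity) (by linarith)
  refine ⟨⟨(v, w, z), by linarith⟩, Subtype.ext ?_⟩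
  simp only [toSphereCRC, hvw, hzc]

instance : CompactSpace SphereC3 := by
  refine isCompact_iff_compactSpace.1 <|
    (isCompact_closedBall (0 : ℂ × ℂ × ℂ) 1).of_isClosed_subset
      (isClosed_eq (by fun_prop) continuous_const) ?_
  rintro ⟨v, w, z⟩ (hp : ‖v‖ ^ 2 + ‖w‖ ^ 2 + ‖z‖ ^ 2 = 1)
  have hle (t : ℂ) (ht : ‖t‖ ^ 2 ≤ 1) : ‖t‖ ≤ 1 := (sq_le_one_iff₀ (norm_nonneg t)).1 ht
  simp only [mem_closedBall_zero_iff, Prod.norm_def]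
  refine max_le (hle v ?_) (max_le (hle w ?_) (hle z ?_)) <;>
    nlinarith [sq_nonneg ‖v‖, sq_nonneg ‖w‖, sq_nonneg ‖z‖]

end SphereC3

open SphereC3 in
/-- The orbit space `S⁵ / Circle` is homeomorphic to `S⁴ ⊂ ℂ × ℝ × ℂ`, in a way such that the
induced actions `s · (v, w, z) = (s v, w, s z)` and `s · (v, w, z) = (s v, w, z)` correspond to
`s · (a, h, c) = (s a, h, s c)` and `s · (a, h, c) = (s a, h, c)` respectively. -/
theorem orbit_space_S5_circle_homeo_S4 :
    ∃ Φ : Quot orbitRelS5 ≃ₜ SphereCRC,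
      ∀ (s : Circle) (x : SphereC3),
        (Φ (Quot.mk orbitRelS5 (actFirstThird s x))).val =
          ((s : ℂ) * (Φ (Quot.mk orbitRelS5 x)).val.1,
            (Φ (Quot.mk orbitRelS5 x)).val.2.1,
            (s : ℂ) * (Φ (Quot.mk orbitRelS5 x)).val.2.2) ∧
        (Φ (Quot.mk orbitRelS5 (actFirst s x))).val =
          ((s : ℂ) * (Φ (Quot.mk orbitRelS5 x)).val.1,
            (Φ (Quot.mk orbitRelS5 x)).val.2.1,
            (Φ (Quot.mk orbitRelS5 x)).val.2.2) := by
  let e : Quot orbitRelS5 → SphereCRC :=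
    Quot.lift toSphereCRC fun x _ ⟨s, hs⟩ => hs ▸ (toSphereCRC_actDiag s x).symm
  have he : Function.Bijective e := by
    refine ⟨?_, (Quot.surjective_lift _).2 toSphereCRC_surjective⟩
    rintro ⟨x⟩ ⟨y⟩ hxy
    exact Quot.sound (orbitRelS5_of_toSphereCRC_eq hxy)
  have he_cont : Continuous e := continuous_quot_lift _ continuous_toSphereCRC
  exact ⟨he_cont.homeoOfEquivCompactToT2 (f := Equiv.ofBijective e he),
    fun s x => ⟨toSphereCRC_actFirstThird s x, toSphereCRC_actFirst s x⟩⟩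
end

section
/- Let the torus T² = Circle × Circle act on the unit sphere S⁶ = {(v,w,z,h) ∈ ℂ³×ℝ : |v|²+|w|²+|z|²+h² = 1} by (s,t)·(v,w,z,h) = (stv, sw, tz, h), and let q : S⁶ → S⁶/T² be the orbit map. Let A ⊂ S⁶ be the subspace of all points (v,w,z,h) for which at least two of the complex coordinates v, w, z are zero. Then the restriction q|_A : A → S⁶/T² is null-homotopic. -/
/-- The unit sphere `S⁶ ⊂ ℂ³ × ℝ`. -/
abbrev SphereC3R : Type :=
  {p : ℂ × ℂ × ℂ × ℝ // ‖p.1‖ ^ 2 + ‖p.2.1‖ ^ 2 + ‖p.2.2.1‖ ^ 2 + p.2.2.2 ^ 2 = 1}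

/-- The defining `T² = Circle × Circle`-action `(s, t) · (v, w, z, h) = (s t v, s w, t z, h)`
on `S⁶`. -/
def actT2 (st : Circle × Circle) (x : SphereC3R) : SphereC3R :=
  ⟨((st.1 : ℂ) * (st.2 : ℂ) * x.val.1, (st.1 : ℂ) * x.val.2.1,
      (st.2 : ℂ) * x.val.2.2.1, x.val.2.2.2), by
    have h := x.property; simpa [Circle.norm_coe, mul_pow] using h⟩

/-- The orbit relation of the `T²`-action on `S⁶`. -/
def orbitRelS6T2 (x y : SphereC3R) : Prop := ∃ st : Circle × Circle, actT2 st x = y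

/-- The subspace `A ⊂ S⁶` of points `(v, w, z, h)` for which at least two of the complex
coordinates `v`, `w`, `z` vanish. -/
def twoCoordsZero : Set SphereC3R :=
  {x | (x.val.1 = 0 ∧ x.val.2.1 = 0) ∨ (x.val.1 = 0 ∧ x.val.2.2.1 = 0) ∨
    (x.val.2.1 = 0 ∧ x.val.2.2.1 = 0)}

/-- The restriction `q|_A : A → S⁶/T²` of the orbit map to `A`, as a continuous map. -/
def orbitMapRestricted : C(twoCoordsZero, Quot orbitRelS6T2) :=
  ⟨fun a => Quot.mk orbitRelS6T2 a.val, continuous_quot_mk.comp continuous_subtype_val⟩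

/-!
On `A` at most one complex coordinate is nonzero, and a single circle factor rotates it onto
the positive real axis. Hence `q|_A = q ∘ N ∘ a` with `a (v, w, z, h) = (|v|, |w|, |z|, h) ∈ ℝ⁴`
and `N` the radial projection of `{y | 0 ≤ y₀, y ≠ 0}` onto the real points of `S⁶`. That
punctured half-space is star-convex about `(1, 0, 0, 0)`, hence contractible, so `a` is
null-homotopic. (The image of `A` in `S⁶/T²`, three arcs joining the poles, is not
contractible: the null-homotopy has to pass through the whole half-space.)
-/

open ContinuousMap

lemma Circle.exists_mul_eq_norm (v : ℂ) : ∃ u : Circle, u * v = ‖v‖ := by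
  refine ⟨Circle.exp (-v.arg), ?_⟩
  conv_lhs => rw [← Complex.norm_mul_exp_arg_mul_I v]
  rw [Circle.coe_exp, mul_left_comm, ← Complex.exp_add]
  simp

lemma ContinuousMap.nullhomotopic_of_contractibleSpace {X Y : Type*} [TopologicalSpace X]
    [TopologicalSpace Y] [ContractibleSpace Y] (f : C(X, Y)) : f.Nullhomotopic := by
  simpa using (id_nullhomotopic Y).comp_left f

lemma starConvex_setOf_nonneg_ne_zero {E : Type*} [AddCommGroup E] [Module ℝ E]
    (ℓ : E →ₗ[ℝ] ℝ) {e : E} (he : 0 < ℓ e) : StarConvex ℝ e {y | 0 ≤ ℓ y ∧ y ≠ 0} := by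
  rintro y ⟨hy, hy0⟩ a b ha hb hab
  have hℓ : ℓ (a • e + b • y) = a * ℓ e + b * ℓ y := by simp
  refine ⟨hℓ ▸ by positivity, fun h0 => hy0 ?_⟩
  have ha0 : a = 0 := by
    have : a * ℓ e + b * ℓ y = 0 := by rw [← hℓ, h0, map_zero]
    nlinarith [mul_nonneg hb hy, mul_nonneg ha he.le]
  simpa [ha0, show b = 1 by linarith] using h0

def puncturedHalfSpace : Set (EuclideanSpace ℝ (Fin 4)) := {y | 0 ≤ y 0 ∧ y ≠ 0}

instance : ContractibleSpace puncturedHalfSpace :=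
  (starConvex_setOf_nonneg_ne_zero (EuclideanSpace.proj (0 : Fin 4)).toLinearMap
    (e := EuclideanSpace.single 0 1) (by simp)).contractibleSpace
    ⟨EuclideanSpace.single 0 1, by simp⟩

noncomputable def normalizeToSphere : C(puncturedHalfSpace, SphereC3R) where
  toFun y := ⟨((y.1 0 / ‖y.1‖ : ℝ), (y.1 1 / ‖y.1‖ : ℝ), (y.1 2 / ‖y.1‖ : ℝ), y.1 3 / ‖y.1‖), by
    have hy : ‖y.1‖ ≠ 0 := norm_ne_zero_iff.mpr y.2.2
    have hnorm := EuclideanSpace.real_norm_sq_eq y.1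
    simp only [Fin.sum_univ_four] at hnorm
    simp only [Complex.norm_real, Real.norm_eq_abs, sq_abs]
    field_simp
    linarith⟩
  continuous_toFun := by
    have hy : ∀ y : puncturedHalfSpace, ‖y.1‖ ≠ 0 := fun y => norm_ne_zero_iff.mpr y.2.2
    fun_prop (disch := exact hy _)

noncomputable def absCoords (x : SphereC3R) : EuclideanSpace ℝ (Fin 4) :=
  !₂[‖x.1.1‖, ‖x.1.2.1‖, ‖x.1.2.2.1‖, x.1.2.2.2]

lemma norm_absCoords (x : SphereC3R) : ‖absCoords x‖ = 1 := by
  rw [EuclideanSpace.norm_eq, Fin.sum_univ_four, Real.sqrt_eq_one]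
  simpa [absCoords] using x.2

noncomputable def absCoordsCM : C(SphereC3R, puncturedHalfSpace) where
  toFun x := ⟨absCoords x, norm_nonneg _, norm_ne_zero_iff.mp (by simp [norm_absCoords])⟩
  continuous_toFun := by unfold absCoords; fun_prop

lemma normalizeToSphere_absCoordsCM (x : SphereC3R) :
    (normalizeToSphere (absCoordsCM x)).val =
      ((‖x.val.1‖ : ℂ), (‖x.val.2.1‖ : ℂ), (‖x.val.2.2.1‖ : ℂ), x.val.2.2.2) := by
  simp only [normalizeToSphere, absCoordsCM, ContinuousMap.coe_mk, norm_absCoords, div_one]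
  simp [absCoords]

lemma orbitRelS6T2_of_val_eq_norms {x y : SphereC3R} (hx : x ∈ twoCoordsZero)
    (hy : y.val = ((‖x.val.1‖ : ℂ), (‖x.val.2.1‖ : ℂ), (‖x.val.2.2.1‖ : ℂ), x.val.2.2.2)) :
    orbitRelS6T2 x y := by
  rcases hx with ⟨hv, hw⟩ | ⟨hv, hz⟩ | ⟨hw, hz⟩
  · obtain ⟨u, hu⟩ := Circle.exists_mul_eq_norm x.val.2.2.1
    exact ⟨(1, u), Subtype.ext (by simp [actT2, hy, hv, hw, hu])⟩
  · obtain ⟨u, hu⟩ := Circle.exists_mul_eq_norm x.val.2.1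
    exact ⟨(u, 1), Subtype.ext (by simp [actT2, hy, hv, hz, hu])⟩
  · obtain ⟨u, hu⟩ := Circle.exists_mul_eq_norm x.val.1
    exact ⟨(1, u), Subtype.ext (by simp [actT2, hy, hw, hz, hu])⟩

/-- The restriction of the orbit map `q : S⁶ → S⁶/T²` to the subspace `A` of points with at
least two vanishing complex coordinates is null-homotopic. -/
theorem orbit_map_restricted_nullhomotopic : orbitMapRestricted.Nullhomotopic := by
  have hfactor : orbitMapRestricted = (⟨Quot.mk orbitRelS6T2, continuous_quot_mk⟩ :
      C(SphereC3R, Quot orbitRelS6T2)).comp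
        (normalizeToSphere.comp (absCoordsCM.restrict twoCoordsZero)) := by
    ext x
    exact Quot.sound (orbitRelS6T2_of_val_eq_norms x.2 (normalizeToSphere_absCoordsCM x))
  rw [hfactor]
  exact ((nullhomotopic_of_contractibleSpace _).comp_right _).comp_right _
end
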